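/- arXiv:1006.5267 — 6 statements merged into one kernel-verified Lean document; each statement's English description precedes it below -/
import Mathlib

section
/- Let v₁, ..., v_l be nonzero vectors in ℝⁿ such that for all j, j′: the angle between v_j and v_{j′} is at most δ and |1 − ‖v_j‖/‖v_{j′}‖| ≤ δ, with δ ≤ 1/2. Then for any weights w_1,...,w_l (nonnegative, summing to 1), the convex combination v = Σ_j w_j v_j satisfies: for every j, the angle between v and v_j is at most κ(δ) and |1 − ‖v‖/‖v_j‖| ≤ κ(δ), where κ(δ) = Cδ for some universal constant C (e.g. C = 10 suffices). -/
open InnerProductGeometry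
open scoped RealInnerProductSpace

/-!
The vectors making an angle at most `δ ≤ π / 2` with `v j` form a convex cone, namely
`{x | cos δ * ‖x‖ * ‖v j‖ ≤ ⟪x, v j⟫}` minus the origin, so the convex combination `u` makes an
angle at most `δ` with `v j`. Its length is at most `(1 + δ) * ‖v j‖` by the triangle inequality
and at least `⟪u, v j⟫ / ‖v j‖ ≥ cos δ * (1 - δ) * ‖v j‖ ≥ (1 - δ) ^ 2 * ‖v j‖`.
-/

theorem abs_one_sub_div_le_iff {a b δ : ℝ} (hb : 0 < b) :
    |1 - a / b| ≤ δ ↔ (1 - δ) * b ≤ a ∧ a ≤ (1 + δ) * b := by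
  rw [abs_le, le_sub_comm, sub_le_comm, div_le_iff₀ hb, le_div_iff₀ hb]
  constructor <;> rintro ⟨h₁, h₂⟩ <;> constructor <;> linarith

section Cone

variable {E : Type*} [NormedAddCommGroup E] [InnerProductSpace ℝ E]

theorem cos_mul_norm_mul_norm_le_inner_of_angle_le {x e : E} {θ : ℝ} (hθ : θ ≤ Real.pi)
    (h : angle x e ≤ θ) : Real.cos θ * (‖x‖ * ‖e‖) ≤ ⟪x, e⟫ := by
  rw [← cos_angle_mul_norm_mul_norm]
  gcongr
  exact Real.cos_le_cos_of_nonneg_of_le_pi (angle_nonneg x e) hθ h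

theorem angle_le_of_cos_mul_norm_mul_norm_le_inner {x e : E} {θ : ℝ} (hx : x ≠ 0) (he : e ≠ 0)
    (hθ₀ : 0 ≤ θ) (hθ : θ ≤ Real.pi) (h : Real.cos θ * (‖x‖ * ‖e‖) ≤ ⟪x, e⟫) :
    angle x e ≤ θ := by
  rw [angle, ← Real.arccos_cos hθ₀ hθ]
  refine Real.arccos_le_arccos ((le_div_iff₀ ?_).2 h)
  positivity

theorem convex_setOf_cos_mul_norm_mul_norm_le_inner {θ : ℝ} (hθ : 0 ≤ Real.cos θ) (e : E) :
    Convex ℝ {x : E | Real.cos θ * (‖x‖ * ‖e‖) ≤ ⟪x, e⟫} := by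
  intro x hx y hy a b ha hb _
  simp only [Set.mem_ofPred_eq, inner_add_left, real_inner_smul_left] at *
  calc Real.cos θ * (‖a • x + b • y‖ * ‖e‖)
      ≤ Real.cos θ * ((a * ‖x‖ + b * ‖y‖) * ‖e‖) := by
        gcongr
        refine (norm_add_le _ _).trans_eq ?_
        rw [norm_smul_of_nonneg ha, norm_smul_of_nonneg hb]
    _ = a * (Real.cos θ * (‖x‖ * ‖e‖)) + b * (Real.cos θ * (‖y‖ * ‖e‖)) := by ring
    _ ≤ a * ⟪x, e⟫ + b * ⟪y, e⟫ := by gcongr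

theorem angle_sum_smul_le {ι : Type*} {s : Finset ι} {w : ι → ℝ} {v : ι → E} {e : E} {θ : ℝ}
    (hθ₀ : 0 ≤ θ) (hθ : θ ≤ Real.pi / 2) (hw : ∀ i ∈ s, 0 ≤ w i) (hws : ∑ i ∈ s, w i = 1)
    (hv : ∀ i ∈ s, angle (v i) e ≤ θ) (hu : ∑ i ∈ s, w i • v i ≠ 0) (he : e ≠ 0) :
    angle (∑ i ∈ s, w i • v i) e ≤ θ := by
  have hθπ : θ ≤ Real.pi := hθ.trans (by linarith [Real.pi_pos])
  refine angle_le_of_cos_mul_norm_mul_norm_le_inner hu he hθ₀ hθπ ?_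
  refine (convex_setOf_cos_mul_norm_mul_norm_le_inner ?_ e).sum_mem hw hws fun i hi => ?_
  · exact Real.cos_nonneg_of_neg_pi_div_two_le_of_le (by linarith) hθ
  · exact cos_mul_norm_mul_norm_le_inner_of_angle_le hθπ (hv i hi)

end Cone

theorem stmt2_general {n l : ℕ} (v : Fin l → EuclideanSpace ℝ (Fin n)) (δ : ℝ)
    (hδ : δ ≤ 1/2)
    (hv : ∀ j, v j ≠ 0)
    (hang : ∀ j j', angle (v j) (v j') ≤ δ)
    (hlen : ∀ j j', |1 - ‖v j‖ / ‖v j'‖| ≤ δ)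
    (w : Fin l → ℝ) (hw : ∀ j, 0 ≤ w j) (hws : ∑ j, w j = 1) :
    ∀ j, angle (∑ j', w j' • v j') (v j) ≤ 10 * δ ∧
      |1 - ‖∑ j', w j' • v j'‖ / ‖v j‖| ≤ 10 * δ := by
  intro j
  set u := ∑ j', w j' • v j'
  have hr : 0 < ‖v j‖ := norm_pos_iff.2 (hv j)
  have hδ₀ : 0 ≤ δ := (angle_nonneg _ _).trans (hang j j)
  have hcos : 1 - δ ≤ Real.cos δ := by nlinarith [Real.one_sub_sq_div_two_le_cos (x := δ)]
  have hnorm i := (abs_one_sub_div_le_iff hr).1 (hlen i j)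
  have hinner i : (1 - δ) ^ 2 * ‖v j‖ ^ 2 ≤ ⟪v j, v i⟫ := by
    rw [real_inner_comm]
    calc (1 - δ) ^ 2 * ‖v j‖ ^ 2 = (1 - δ) * ((1 - δ) * ‖v j‖ * ‖v j‖) := by ring
      _ ≤ Real.cos δ * (‖v i‖ * ‖v j‖) :=
        mul_le_mul hcos (by gcongr; exact (hnorm i).1)
          (mul_nonneg (mul_nonneg (by linarith) hr.le) hr.le) (by linarith)
      _ ≤ ⟪v i, v j⟫ :=
        cos_mul_norm_mul_norm_le_inner_of_angle_le (by linarith [Real.pi_gt_three]) (hang i j)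
  have hu_inner : (1 - δ) ^ 2 * ‖v j‖ ^ 2 ≤ ⟪v j, u⟫ :=
    (convex_halfSpace_ge (innerₛₗ ℝ (v j)).isLinear _).sum_mem (fun i _ => hw i) hws
      fun i _ => hinner i
  have hu_le : ‖u‖ ≤ (1 + δ) * ‖v j‖ := by
    simpa using (convex_closedBall (0 : EuclideanSpace ℝ (Fin n)) _).sum_mem (fun i _ => hw i) hws
      fun i _ => mem_closedBall_zero_iff.2 (hnorm i).2
  have hu_ge : (1 - δ) ^ 2 * ‖v j‖ ≤ ‖u‖ := by
    nlinarith [real_inner_le_norm (v j) u]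
  refine ⟨?_, (abs_one_sub_div_le_iff hr).2 ⟨by nlinarith, by nlinarith⟩⟩
  refine (angle_sum_smul_le hδ₀ (by linarith [Real.pi_gt_three]) (fun i _ => hw i) hws
    (fun i _ => hang i j) ?_ (hv j)).trans (by linarith)
  exact norm_pos_iff.1 ((mul_pos (pow_pos (by linarith) 2) hr).trans_le hu_ge)

theorem stmt2 {n l : ℕ} (v : Fin l → EuclideanSpace ℝ (Fin n)) (δ : ℝ)
    (hδ : δ ≤ 1/2) (hδ0 : 0 ≤ δ)
    (hv : ∀ j, v j ≠ 0)
    (hang : ∀ j j', angle (v j) (v j') ≤ δ)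
    (hlen : ∀ j j', |1 - ‖v j‖ / ‖v j'‖| ≤ δ)
    (w : Fin l → ℝ) (hw : ∀ j, 0 ≤ w j) (hws : ∑ j, w j = 1) :
    ∀ j, angle (∑ j', w j' • v j') (v j) ≤ 10 * δ ∧
      |1 - ‖∑ j', w j' • v j'‖ / ‖v j‖| ≤ 10 * δ :=
  stmt2_general v δ hδ hv hang hlen w hw hws
end

section
/- Let a, x₁, y₁, x₂, y₂ be points in ℝ² (or any Euclidean space) with x₁ ≠ y₁, x₂ ≠ y₂, and a distinct from all of them. Suppose ‖a − x₁‖, ‖a − y₁‖, ‖a − x₂‖, ‖a − y₂‖ ≥ D and ‖x₁ − y₁‖, ‖x₁ − x₂‖, ‖x₁ − y₂‖ ≤ d with d ≤ δ·D, δ ≤ 1/4. Then |cos ∠(a; x₁, y₁) − (‖a−x₁‖ − ‖a−y₁‖)/‖x₁ − y₁‖| ≤ C·δ for a universal constant C, where ∠(a; x₁, y₁) denotes the angle at vertex x₁ of the triangle (a, x₁, y₁). -/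
/-!
Write `u = a - x₁` and `v = y₁ - x₁`. Since `‖u‖² - ‖u - v‖² = 2⟪u, v⟫ - ‖v‖²`, the difference
quotient `(‖u‖ - ‖u - v‖) / ‖v‖` equals `(2⟪u, v⟫ - ‖v‖²) / ((‖u‖ + ‖u - v‖) ‖v‖)`, and subtracting
it from `cos ∠ = ⟪u, v⟫ / (‖u‖ ‖v‖)` leaves an error of size at most `2 ‖v‖ / (‖u‖ + ‖u - v‖)`,
which is at most `2 ‖v‖ / ‖u‖ ≤ 2 d / D ≤ 2 δ`.
-/

open InnerProductGeometry RealInnerProductSpace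

section

variable {V : Type*} [NormedAddCommGroup V] [InnerProductSpace ℝ V]

theorem real_inner_div_sub_norm_sub_div_eq {u v : V} (hu : u ≠ 0) (hv : v ≠ 0) :
    ⟪u, v⟫ / (‖u‖ * ‖v‖) - (‖u‖ - ‖u - v‖) / ‖v‖ =
      (⟪u, v⟫ * (‖u - v‖ - ‖u‖) + ‖u‖ * ‖v‖ ^ 2) / (‖u‖ * (‖u‖ + ‖u - v‖) * ‖v‖) := by
  have hs : 0 < ‖u‖ := norm_pos_iff.2 hu
  have hw : 0 < ‖v‖ := norm_pos_iff.2 hv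
  have hst : 0 < ‖u‖ + ‖u - v‖ := by positivity
  have hsq : ‖u - v‖ ^ 2 = ‖u‖ ^ 2 - 2 * ⟪u, v⟫ + ‖v‖ ^ 2 := norm_sub_sq_real u v
  have hdiff : ‖u‖ - ‖u - v‖ = (2 * ⟪u, v⟫ - ‖v‖ ^ 2) / (‖u‖ + ‖u - v‖) := by
    rw [eq_div_iff hst.ne']
    linear_combination -hsq
  rw [hdiff]
  field_simp
  ring

theorem abs_real_inner_mul_norm_sub_sub_le (u v : V) :
    |⟪u, v⟫ * (‖u - v‖ - ‖u‖) + ‖u‖ * ‖v‖ ^ 2| ≤ 2 * ‖u‖ * ‖v‖ ^ 2 := by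
  have hts : |‖u - v‖ - ‖u‖| ≤ ‖v‖ := by simpa using abs_norm_sub_norm_le (u - v) u
  calc |⟪u, v⟫ * (‖u - v‖ - ‖u‖) + ‖u‖ * ‖v‖ ^ 2|
      ≤ |⟪u, v⟫| * |‖u - v‖ - ‖u‖| + ‖u‖ * ‖v‖ ^ 2 := by
        refine (abs_add_le _ _).trans_eq ?_
        rw [abs_mul, abs_of_nonneg (by positivity : (0 : ℝ) ≤ ‖u‖ * ‖v‖ ^ 2)]
    _ ≤ (‖u‖ * ‖v‖) * ‖v‖ + ‖u‖ * ‖v‖ ^ 2 := by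
        gcongr
        exact abs_real_inner_le_norm u v
    _ = 2 * ‖u‖ * ‖v‖ ^ 2 := by ring

theorem abs_cos_angle_sub_norm_sub_div_le {u v : V} (hu : u ≠ 0) (hv : v ≠ 0) :
    |Real.cos (angle u v) - (‖u‖ - ‖u - v‖) / ‖v‖| ≤ 2 * ‖v‖ / (‖u‖ + ‖u - v‖) := by
  have hs : 0 < ‖u‖ := norm_pos_iff.2 hu
  have hw : 0 < ‖v‖ := norm_pos_iff.2 hv
  have hden : 0 < ‖u‖ * (‖u‖ + ‖u - v‖) * ‖v‖ := by positivity
  rw [cos_angle, real_inner_div_sub_norm_sub_div_eq hu hv, abs_div, abs_of_pos hden]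
  calc _ ≤ 2 * ‖u‖ * ‖v‖ ^ 2 / (‖u‖ * (‖u‖ + ‖u - v‖) * ‖v‖) := by
        gcongr; exact abs_real_inner_mul_norm_sub_sub_le u v
    _ = 2 * ‖v‖ / (‖u‖ + ‖u - v‖) := by field_simp

end

theorem stmt10 : ∃ C : ℝ, 0 < C ∧ ∀ (n : ℕ)
    (a x₁ y₁ x₂ y₂ : EuclideanSpace ℝ (Fin n)) (D d δ : ℝ),
    x₁ ≠ y₁ → x₂ ≠ y₂ → a ≠ x₁ → a ≠ y₁ → a ≠ x₂ → a ≠ y₂ →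
    0 < D → 0 < δ → δ ≤ 1/4 → d ≤ δ * D →
    D ≤ ‖a - x₁‖ → D ≤ ‖a - y₁‖ → D ≤ ‖a - x₂‖ → D ≤ ‖a - y₂‖ →
    ‖x₁ - y₁‖ ≤ d → ‖x₁ - x₂‖ ≤ d → ‖x₁ - y₂‖ ≤ d →
    |Real.cos (angle (a - x₁) (y₁ - x₁)) - (‖a - x₁‖ - ‖a - y₁‖) / ‖x₁ - y₁‖|
      ≤ C * δ := by
  refine ⟨2, two_pos, ?_⟩
  intro n a x₁ y₁ x₂ y₂ D d δ hxy _ hax _ _ _ hD hδ _ hdδ hD₁ _ _ _ hd₁ _ _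
  have hu : a - x₁ ≠ 0 := sub_ne_zero.2 hax
  have hv : y₁ - x₁ ≠ 0 := sub_ne_zero.2 hxy.symm
  have hs : 0 < ‖a - x₁‖ := hD.trans_le hD₁
  have hw : ‖y₁ - x₁‖ ≤ δ * ‖a - x₁‖ := by
    rw [norm_sub_rev]
    exact hd₁.trans (hdδ.trans (by gcongr))
  have hbound := abs_cos_angle_sub_norm_sub_div_le hu hv
  rw [sub_sub_sub_cancel_right, norm_sub_rev y₁] at hbound
  calc _ ≤ 2 * ‖x₁ - y₁‖ / (‖a - x₁‖ + ‖a - y₁‖) := hbound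
    _ ≤ 2 * (δ * ‖a - x₁‖) / ‖a - x₁‖ := by
        rw [norm_sub_rev x₁]
        gcongr
        exact le_add_of_nonneg_right (norm_nonneg _)
    _ = 2 * δ := by field_simp
end

section
/- Let a, x₁, y₁, x₂, y₂ be points in ℝⁿ with x₁ ≠ y₁, x₂ ≠ y₂, all at distance ≥ D from a, with mutual distances among x₁, y₁, x₂, y₂ at most δ·D, δ ≤ 1/4. If the comparison angles satisfy |∠(a;x₁,y₁) − ∠(a;x₂,y₂)| ≤ δ, then |(‖a−x₁‖ − ‖a−y₁‖)/‖x₁−y₁‖ − (‖a−x₂‖ − ‖a−y₂‖)/‖x₂−y₂‖| ≤ C·δ for a universal constant C. -/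
open InnerProductGeometry

private lemma quot_eq {r s d c : ℝ} (hd : 0 < d) (hrs : 0 < r + s)
    (hlaw : s * s = r * r + d * d - 2 * r * d * c) :
    (r - s) / d = c + c * ((r - s) / (r + s)) - d / (r + s) := by
  field_simp
  nlinarith [hlaw]

theorem stmt11 : ∃ C : ℝ, 0 < C ∧ ∀ (n : ℕ)
    (a x₁ y₁ x₂ y₂ : EuclideanSpace ℝ (Fin n)) (D δ : ℝ),
    x₁ ≠ y₁ → x₂ ≠ y₂ →
    0 < D → 0 < δ → δ ≤ 1/4 →
    D ≤ ‖a - x₁‖ → D ≤ ‖a - y₁‖ → D ≤ ‖a - x₂‖ → D ≤ ‖a - y₂‖ →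
    (∀ p q : EuclideanSpace ℝ (Fin n),
      p ∈ ({x₁, y₁, x₂, y₂} : Set (EuclideanSpace ℝ (Fin n))) →
      q ∈ ({x₁, y₁, x₂, y₂} : Set (EuclideanSpace ℝ (Fin n))) → ‖p - q‖ ≤ δ * D) →
    |angle (a - x₁) (y₁ - x₁) - angle (a - x₂) (y₂ - x₂)| ≤ δ →
    |(‖a - x₁‖ - ‖a - y₁‖) / ‖x₁ - y₁‖ - (‖a - x₂‖ - ‖a - y₂‖) / ‖x₂ - y₂‖|
      ≤ C * δ := by
  refine ⟨3, by norm_num, ?_⟩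
  intro n a x₁ y₁ x₂ y₂ D δ hxy₁ hxy₂ hD hδ hδ4 hax₁ hay₁ hax₂ hay₂ hsmall hang
  set r₁ := ‖a - x₁‖ with hr₁
  set s₁ := ‖a - y₁‖ with hs₁
  set r₂ := ‖a - x₂‖ with hr₂
  set s₂ := ‖a - y₂‖ with hs₂
  set d₁ := ‖x₁ - y₁‖ with hd₁
  set d₂ := ‖x₂ - y₂‖ with hd₂
  set c₁ := Real.cos (angle (a - x₁) (y₁ - x₁)) with hc₁
  set c₂ := Real.cos (angle (a - x₂) (y₂ - x₂)) with hc₂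
  have hd₁pos : 0 < d₁ := by
    rw [hd₁, norm_pos_iff]; exact sub_ne_zero_of_ne hxy₁
  have hd₂pos : 0 < d₂ := by
    rw [hd₂, norm_pos_iff]; exact sub_ne_zero_of_ne hxy₂
  have hr₁D : D ≤ r₁ := hax₁
  have hs₁D : D ≤ s₁ := hay₁
  have hsum₁ : 0 < r₁ + s₁ := by linarith
  have hsum₂ : 0 < r₂ + s₂ := by linarith
  -- law of cosines
  have hlaw₁ : s₁ * s₁ = r₁ * r₁ + d₁ * d₁ - 2 * r₁ * d₁ * c₁ := by
    have := norm_sub_sq_eq_norm_sq_add_norm_sq_sub_two_mul_norm_mul_norm_mul_cos_angle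
      (a - x₁) (y₁ - x₁)
    have h1 : a - x₁ - (y₁ - x₁) = a - y₁ := by abel
    have h2 : ‖y₁ - x₁‖ = d₁ := by rw [hd₁, norm_sub_rev]
    rw [h1, h2] at this
    rw [this]
  have hlaw₂ : s₂ * s₂ = r₂ * r₂ + d₂ * d₂ - 2 * r₂ * d₂ * c₂ := by
    have := norm_sub_sq_eq_norm_sq_add_norm_sq_sub_two_mul_norm_mul_norm_mul_cos_angle
      (a - x₂) (y₂ - x₂)
    have h1 : a - x₂ - (y₂ - x₂) = a - y₂ := by abel
    have h2 : ‖y₂ - x₂‖ = d₂ := by rw [hd₂, norm_sub_rev]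
    rw [h1, h2] at this
    rw [this]
  have hq₁ := quot_eq hd₁pos hsum₁ hlaw₁
  have hq₂ := quot_eq hd₂pos hsum₂ hlaw₂
  -- bounds
  have hd₁le : d₁ ≤ δ * D := hsmall x₁ y₁ (by simp) (by simp)
  have hd₂le : d₂ ≤ δ * D := hsmall x₂ y₂ (by simp) (by simp)
  have hrs₁ : |r₁ - s₁| ≤ d₁ := by
    have := abs_norm_sub_norm_le (a - x₁) (a - y₁)
    have h1 : a - x₁ - (a - y₁) = y₁ - x₁ := by abel
    rw [h1, norm_sub_rev y₁ x₁] at this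
    exact this
  have hrs₂ : |r₂ - s₂| ≤ d₂ := by
    have := abs_norm_sub_norm_le (a - x₂) (a - y₂)
    have h1 : a - x₂ - (a - y₂) = y₂ - x₂ := by abel
    rw [h1, norm_sub_rev y₂ x₂] at this
    exact this
  have hmul₁ : δ * (2 * D) ≤ δ * (r₁ + s₁) :=
    mul_le_mul_of_nonneg_left (by linarith) hδ.le
  have hmul₂ : δ * (2 * D) ≤ δ * (r₂ + s₂) :=
    mul_le_mul_of_nonneg_left (by linarith) hδ.le
  have hε₁ : |(r₁ - s₁) / (r₁ + s₁)| ≤ δ / 2 := by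
    rw [abs_div, abs_of_pos hsum₁, div_le_iff₀ hsum₁]
    linarith
  have hε₂ : |(r₂ - s₂) / (r₂ + s₂)| ≤ δ / 2 := by
    rw [abs_div, abs_of_pos hsum₂, div_le_iff₀ hsum₂]
    linarith
  have hη₁ : |d₁ / (r₁ + s₁)| ≤ δ / 2 := by
    rw [abs_div, abs_of_pos hsum₁, abs_of_pos hd₁pos, div_le_iff₀ hsum₁]
    linarith
  have hη₂ : |d₂ / (r₂ + s₂)| ≤ δ / 2 := by
    rw [abs_div, abs_of_pos hsum₂, abs_of_pos hd₂pos, div_le_iff₀ hsum₂]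
    linarith
  have hc₁le : |c₁| ≤ 1 := Real.abs_cos_le_one _
  have hc₂le : |c₂| ≤ 1 := Real.abs_cos_le_one _
  have hcos : |c₁ - c₂| ≤ δ := by
    set A := angle (a - x₁) (y₁ - x₁)
    set B := angle (a - x₂) (y₂ - x₂)
    have hAB := Real.cos_sub_cos A B
    calc |c₁ - c₂| = 2 * (|Real.sin ((A + B) / 2)| * |Real.sin ((A - B) / 2)|) := by
          rw [hc₁, hc₂, hAB, abs_mul, abs_mul]
          norm_num; ring
      _ ≤ 2 * (1 * |(A - B) / 2|) := by
          have h1 : |Real.sin ((A + B) / 2)| ≤ 1 :=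
            abs_le.mpr ⟨Real.neg_one_le_sin _, Real.sin_le_one _⟩
          have h2 : |Real.sin ((A - B) / 2)| ≤ |(A - B) / 2| := Real.abs_sin_le_abs
          have := mul_le_mul h1 h2 (abs_nonneg _) zero_le_one
          linarith
      _ = |A - B| := by rw [abs_div, abs_two]; ring
      _ ≤ δ := hang
  rw [hq₁, hq₂]
  have key : |c₁ + c₁ * ((r₁ - s₁) / (r₁ + s₁)) - d₁ / (r₁ + s₁) -
      (c₂ + c₂ * ((r₂ - s₂) / (r₂ + s₂)) - d₂ / (r₂ + s₂))| ≤
      |c₁ - c₂| + |c₁| * |(r₁ - s₁) / (r₁ + s₁)| + |c₂| * |(r₂ - s₂) / (r₂ + s₂)|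
        + |d₁ / (r₁ + s₁)| + |d₂ / (r₂ + s₂)| := by
    calc _ ≤ |c₁ - c₂| + |c₁ * ((r₁ - s₁) / (r₁ + s₁)) - c₂ * ((r₂ - s₂) / (r₂ + s₂))|
          + |d₂ / (r₂ + s₂) - d₁ / (r₁ + s₁)| := by
            have : c₁ + c₁ * ((r₁ - s₁) / (r₁ + s₁)) - d₁ / (r₁ + s₁) -
                (c₂ + c₂ * ((r₂ - s₂) / (r₂ + s₂)) - d₂ / (r₂ + s₂)) =
                (c₁ - c₂) + (c₁ * ((r₁ - s₁) / (r₁ + s₁)) - c₂ * ((r₂ - s₂) / (r₂ + s₂)))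
                + (d₂ / (r₂ + s₂) - d₁ / (r₁ + s₁)) := by ring
            rw [this]
            exact (abs_add_le _ _).trans (by gcongr <;> exact abs_add_le _ _)
      _ ≤ _ := by
            have h1 : |c₁ * ((r₁ - s₁) / (r₁ + s₁)) - c₂ * ((r₂ - s₂) / (r₂ + s₂))| ≤
                |c₁| * |(r₁ - s₁) / (r₁ + s₁)| + |c₂| * |(r₂ - s₂) / (r₂ + s₂)| := by
              calc _ ≤ |c₁ * ((r₁ - s₁) / (r₁ + s₁))| + |c₂ * ((r₂ - s₂) / (r₂ + s₂))| :=
                    abs_sub _ _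
                _ = _ := by rw [abs_mul, abs_mul]
            have h2 : |d₂ / (r₂ + s₂) - d₁ / (r₁ + s₁)| ≤
                |d₁ / (r₁ + s₁)| + |d₂ / (r₂ + s₂)| := by
              calc _ ≤ |d₂ / (r₂ + s₂)| + |d₁ / (r₁ + s₁)| := abs_sub _ _
                _ = _ := by ring
            linarith
  calc _ ≤ |c₁ - c₂| + |c₁| * |(r₁ - s₁) / (r₁ + s₁)| + |c₂| * |(r₂ - s₂) / (r₂ + s₂)|
        + |d₁ / (r₁ + s₁)| + |d₂ / (r₂ + s₂)| := key
    _ ≤ δ + 1 * (δ/2) + 1 * (δ/2) + δ/2 + δ/2 := by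
        gcongr <;> first
          | exact hcos | exact hc₁le | exact hc₂le | exact hε₁ | exact hε₂
          | exact hη₁ | exact hη₂ | positivity
    _ = 3 * δ := by ring
end

section
/- Let u₁, ..., u_n and v₁, ..., v_n be two bases of ℝⁿ consisting of unit vectors, each basis δ-almost orthonormal in the sense that |⟨u_i, u_j⟩| ≤ δ and |⟨v_i, v_j⟩| ≤ δ for i ≠ j, with δ ≤ 1/(4n). Let w, w′ be unit vectors. If |⟨u_i, w⟩ − ⟨u_i, w′⟩| ≤ ε for all i, then ‖w − w′‖ ≤ C·n·(ε + δ‖w − w′‖), hence ‖w − w′‖ ≤ C′·n·ε for universal constants C, C′ (assuming C·n·δ ≤ 1/2); consequently |⟨v_i, w⟩ − ⟨v_i, w′⟩| ≤ C′·n·ε for all i. -/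
/-!
Write `d = w - w'` in the frame `u` as `d = ∑ cⱼ uⱼ`. Pairing with `uᵢ` gives
`cᵢ = ⟪uᵢ, d⟫ - ∑_{j ≠ i} cⱼ ⟪uᵢ, uⱼ⟫`, so `|cᵢ| ≤ ε + δ ∑ |cⱼ|`; summing and absorbing
`n δ ≤ 1/4` gives `∑ |cⱼ| ≤ (4/3) n ε`. Hence `‖d‖² = ∑ cⱼ ⟪uⱼ, d⟫ ≤ (4/3) n ε²`, and the
coordinates with respect to any other unit vectors `vᵢ` are controlled by Cauchy–Schwarz.
-/

open scoped RealInnerProductSpace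

section

variable {ι E : Type*} [NormedAddCommGroup E] [InnerProductSpace ℝ E]

structure AlmostOrthonormal (δ : ℝ) (u : ι → E) : Prop where
  norm_eq_one : ∀ i, ‖u i‖ = 1
  abs_inner_le : ∀ i j, i ≠ j → |⟪u i, u j⟫| ≤ δ

namespace AlmostOrthonormal

variable {δ : ℝ} {u : ι → E}

lemma inner_self (hu : AlmostOrthonormal δ u) (i : ι) : ⟪u i, u i⟫ = 1 := by
  rw [real_inner_self_eq_norm_sq, hu.norm_eq_one i, one_pow]

variable [Fintype ι]

lemma abs_coeff_le [DecidableEq ι] (hu : AlmostOrthonormal δ u) (hδ : 0 ≤ δ) (c : ι → ℝ)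
    (i : ι) : |c i| ≤ |⟪u i, ∑ j, c j • u j⟫| + δ * ∑ j, |c j| := by
  set s := ∑ j ∈ Finset.univ.erase i, c j * ⟪u i, u j⟫
  have hexpand : ⟪u i, ∑ j, c j • u j⟫ = c i + s := by
    simp only [inner_sum, real_inner_smul_right]
    rw [← Finset.add_sum_erase _ _ (Finset.mem_univ i), hu.inner_self, mul_one]
  have hoff : |s| ≤ δ * ∑ j, |c j| :=
    calc |s| ≤ ∑ j ∈ Finset.univ.erase i, |c j| * δ := by
          refine (Finset.abs_sum_le_sum_abs _ _).trans (Finset.sum_le_sum fun j hj => ?_)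
          rw [abs_mul]
          exact mul_le_mul_of_nonneg_left
            (hu.abs_inner_le i j (Finset.ne_of_mem_erase hj).symm) (abs_nonneg _)
      _ ≤ ∑ j, |c j| * δ :=
          Finset.sum_le_sum_of_subset_of_nonneg (Finset.erase_subset _ _)
            fun j _ _ => mul_nonneg (abs_nonneg _) hδ
      _ = δ * ∑ j, |c j| := by rw [Finset.mul_sum]; simp only [mul_comm]
  calc |c i| ≤ |c i + s| + |s| := by simpa using abs_sub (c i + s) s
    _ ≤ |⟪u i, ∑ j, c j • u j⟫| + δ * ∑ j, |c j| := by rw [hexpand]; gcongr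

lemma sum_abs_coeff_le (hu : AlmostOrthonormal δ u) (hδ : 0 ≤ δ)
    (hcard : Fintype.card ι * δ ≤ 1 / 4) {c : ι → ℝ} {e : ℝ}
    (he : ∀ i, |⟪u i, ∑ j, c j • u j⟫| ≤ e) :
    ∑ i, |c i| ≤ 4 / 3 * Fintype.card ι * e := by
  classical
  set S := ∑ i, |c i|
  have hS : S ≤ Fintype.card ι * e + Fintype.card ι * δ * S :=
    calc S ≤ ∑ _i : ι, (e + δ * S) :=
          Finset.sum_le_sum fun i _ => (hu.abs_coeff_le hδ c i).trans (by linarith [he i])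
      _ = Fintype.card ι * e + Fintype.card ι * δ * S := by
          rw [Finset.sum_const, Finset.card_univ, nsmul_eq_mul]; ring
  have habsorb : Fintype.card ι * δ * S ≤ 1 / 4 * S :=
    mul_le_mul_of_nonneg_right hcard (Finset.sum_nonneg fun i _ => abs_nonneg _)
  linarith

lemma linearIndependent (hu : AlmostOrthonormal δ u) (hδ : 0 ≤ δ)
    (hcard : Fintype.card ι * δ ≤ 1 / 4) : LinearIndependent ℝ u := by
  rw [Fintype.linearIndependent_iff]
  intro c hc i
  have hsum : ∑ j, |c j| ≤ 0 := by
    simpa using hu.sum_abs_coeff_le hδ hcard (e := 0) (by simp [hc])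
  exact abs_eq_zero.mp <| (Finset.sum_eq_zero_iff_of_nonneg fun j _ => abs_nonneg (c j)).mp
    (hsum.antisymm (by positivity)) i (Finset.mem_univ i)

lemma norm_sq_le [FiniteDimensional ℝ E] (hu : AlmostOrthonormal δ u) (hδ : 0 ≤ δ)
    (hcard : Fintype.card ι * δ ≤ 1 / 4) (hdim : Fintype.card ι = Module.finrank ℝ E)
    {d : E} {ε : ℝ} (hε : 0 ≤ ε) (hd : ∀ i, |⟪u i, d⟫| ≤ ε) :
    ‖d‖ ^ 2 ≤ 4 / 3 * Fintype.card ι * ε ^ 2 := by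
  have hspan := (hu.linearIndependent hδ hcard).span_eq_top_of_card_eq_finrank' hdim
  obtain ⟨c, rfl⟩ := (Submodule.mem_span_range_iff_exists_fun ℝ).mp
    (hspan ▸ Submodule.mem_top : d ∈ Submodule.span ℝ (Set.range u))
  have hc := hu.sum_abs_coeff_le hδ hcard hd
  calc ‖∑ j, c j • u j‖ ^ 2 = ∑ j, c j * ⟪u j, ∑ k, c k • u k⟫ := by
        rw [← real_inner_self_eq_norm_sq, sum_inner]; simp only [real_inner_smul_left]
    _ ≤ ∑ j, |c j| * ε := Finset.sum_le_sum fun j _ =>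
        ((le_abs_self _).trans_eq (abs_mul _ _)).trans (by gcongr; exact hd j)
    _ = (∑ j, |c j|) * ε := Finset.sum_mul _ _ _ |>.symm
    _ ≤ 4 / 3 * Fintype.card ι * ε * ε := mul_le_mul_of_nonneg_right hc hε
    _ = 4 / 3 * Fintype.card ι * ε ^ 2 := by ring

end AlmostOrthonormal

end

lemma natCast_mul_le_of_le_one_div {n : ℕ} {δ : ℝ} (h : δ ≤ 1 / (4 * n)) : n * δ ≤ 1 / 4 := by
  rcases n.eq_zero_or_pos with rfl | hn
  · norm_num
  · rw [le_div_iff₀ (by positivity)] at h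
    linarith

lemma le_two_mul_of_sq_le_four_thirds_mul {n : ℕ} {x ε : ℝ} (hx : 0 ≤ x) (hε : 0 ≤ ε)
    (h : x ^ 2 ≤ 4 / 3 * n * ε ^ 2) : x ≤ 2 * n * ε := by
  have hn : (4 / 3 : ℝ) * n ≤ (2 * n) ^ 2 := by
    rcases n.eq_zero_or_pos with rfl | hn
    · norm_num
    · have : (1 : ℝ) ≤ n := by exact_mod_cast hn
      nlinarith
  refine (pow_le_pow_iff_left₀ hx (by positivity) two_ne_zero).mp ?_
  calc x ^ 2 ≤ 4 / 3 * n * ε ^ 2 := h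
    _ ≤ (2 * n) ^ 2 * ε ^ 2 := mul_le_mul_of_nonneg_right hn (sq_nonneg ε)
    _ = (2 * n * ε) ^ 2 := by ring

theorem stmt12 : ∃ C : ℝ, 0 < C ∧ ∀ (n : ℕ)
    (u v : Fin n → EuclideanSpace ℝ (Fin n)) (w w' : EuclideanSpace ℝ (Fin n))
    (δ ε : ℝ),
    0 ≤ δ → δ ≤ 1 / (4 * n) → 0 ≤ ε →
    (∀ i, ‖u i‖ = 1) → (∀ i, ‖v i‖ = 1) →
    (∀ i j, i ≠ j → |⟪u i, u j⟫| ≤ δ) → (∀ i j, i ≠ j → |⟪v i, v j⟫| ≤ δ) →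
    ‖w‖ = 1 → ‖w'‖ = 1 →
    (∀ i, |⟪u i, w⟫ - ⟪u i, w'⟫| ≤ ε) →
    ‖w - w'‖ ≤ C * n * ε ∧ ∀ i, |⟪v i, w⟫ - ⟪v i, w'⟫| ≤ C * n * ε := by
  refine ⟨2, two_pos, fun n u v w w' δ ε hδ hδn hε hu hv huδ _ _ _ hdiff => ?_⟩
  have hframe : AlmostOrthonormal δ u := ⟨hu, huδ⟩
  have hcard : Fintype.card (Fin n) * δ ≤ 1 / 4 := by
    simpa using natCast_mul_le_of_le_one_div hδn
  have hd : ∀ i, |⟪u i, w - w'⟫| ≤ ε := fun i => by rw [inner_sub_right]; exact hdiff i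
  have hsq := hframe.norm_sq_le hδ hcard (by simp) hε hd
  rw [Fintype.card_fin] at hsq
  have hnorm := le_two_mul_of_sq_le_four_thirds_mul (norm_nonneg _) hε hsq
  refine ⟨hnorm, fun i => ?_⟩
  calc |⟪v i, w⟫ - ⟪v i, w'⟫| = |⟪v i, w - w'⟫| := by rw [inner_sub_right]
    _ ≤ ‖v i‖ * ‖w - w'‖ := abs_real_inner_le_norm _ _
    _ ≤ 2 * n * ε := by rw [hv i, one_mul]; exact hnorm
end

section
/- Let f : X → ℝⁿ be a map from a metric space X with |1 − ‖f(x)−f(y)‖/d(x,y)| < δ for all x ≠ y (δ < 1/2), and let Q = {q_1,...,q_l}, R = {r_1,...,r_l} ⊂ X satisfy: the vectors f(r_j) − f(q_j) are pairwise at angle ≤ δ and pairwise length ratio within 1 ± δ. Then for weights W¹, W² with (Σ_j |w¹_j − w²_j|)·max_{j,j'} ‖f(r_j) − f(r_{j'})‖ ≤ δ·min_j ‖f(q_j) − f(r_j)‖, the points P = Σ_j w¹_j f(q_j) and S = Σ_j w²_j f(r_j) satisfy |1 − ‖P − S‖/‖f(q_j) − f(r_j)‖| ≤ Cδ for all j and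 a universal constant C; consequently, pulling back by f, |1 − d(f⁻¹(P), f⁻¹(S))/d(q_j, r_j)| ≤ C′δ whenever P, S lie in a convex set contained in f(X) where f is injective. -/
open InnerProductGeometry

open RealInnerProductSpace

set_option maxHeartbeats 1000000 in
theorem stmt16 : ∃ C : ℝ, 0 < C ∧ ∀ (X : Type*) [MetricSpace X] (n l : ℕ)
    (f : X → EuclideanSpace ℝ (Fin n)) (q r : Fin l → X)
    (w1 w2 : Fin l → ℝ) (δ : ℝ),
    0 < δ → δ < 1/2 →
    (∀ x y : X, x ≠ y → |1 - ‖f x - f y‖ / dist x y| < δ) →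
    (∀ j, q j ≠ r j) →
    (∀ j j', angle (f (r j) - f (q j)) (f (r j') - f (q j')) ≤ δ) →
    (∀ j j', |1 - ‖f (r j) - f (q j)‖ / ‖f (r j') - f (q j')‖| ≤ δ) →
    (∀ j, 0 ≤ w1 j) → (∀ j, 0 ≤ w2 j) → (∑ j, w1 j = 1) → (∑ j, w2 j = 1) →
    (∀ j j' j'', (∑ i, |w1 i - w2 i|) * ‖f (r j) - f (r j')‖
        ≤ δ * ‖f (q j'') - f (r j'')‖) →
    (∀ j, |1 - ‖(∑ i, w1 i • f (q i)) - (∑ i, w2 i • f (r i))‖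
        / ‖f (q j) - f (r j)‖| ≤ C * δ) ∧
    (Function.Injective f → ∀ (p s : X),
      f p = ∑ i, w1 i • f (q i) → f s = ∑ i, w2 i • f (r i) →
      ∀ j, |1 - dist p s / dist (q j) (r j)| ≤ C * δ) := by
  refine ⟨20, by norm_num, ?_⟩
  intro X _ n l f q r w1 w2 δ hδ0 hδh hiso hqr hang hlen hw1 hw2 hs1 hs2 hWW
  have key : ∀ j, |1 - ‖(∑ i, w1 i • f (q i)) - (∑ i, w2 i • f (r i))‖
      / ‖f (q j) - f (r j)‖| ≤ 3 * δ := by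
    intro j
    set v : Fin l → EuclideanSpace ℝ (Fin n) := fun i => f (r i) - f (q i) with hv
    have hangv : ∀ i i', angle (v i) (v i') ≤ δ := by
      simp only [hv]; exact hang
    have hlenv : ∀ i i', |1 - ‖v i‖ / ‖v i'‖| ≤ δ := by
      simp only [hv]; exact hlen
    have hmrev : ∀ i, ‖f (q i) - f (r i)‖ = ‖v i‖ := by
      intro i; simp only [hv]; exact norm_sub_rev _ _
    have hm : ∀ i, 0 < ‖v i‖ := by
      intro i
      have hd : 0 < dist (q i) (r i) := dist_pos.2 (hqr i)
      have h := (abs_lt.mp (hiso (q i) (r i) (hqr i))).2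
      rcases (norm_nonneg (f (q i) - f (r i))).lt_or_eq with h0 | h0
      · rwa [hmrev i] at h0
      · rw [← h0, zero_div] at h
        linarith
    have hb := hm j
    -- per-index bound
    have hvd : ∀ i, ‖v i - v j‖ ≤ 2 * δ * ‖v j‖ := by
      intro i
      have hcos : Real.cos δ ≤ Real.cos (angle (v i) (v j)) :=
        Real.cos_le_cos_of_nonneg_of_le_pi (angle_nonneg _ _)
          (by linarith [Real.pi_gt_three]) (hangv i j)
      have hcos2 : 1 - δ ^ 2 / 2 ≤ Real.cos (angle (v i) (v j)) :=
        le_trans (Real.one_sub_sq_div_two_le_cos) hcos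
      have hip := cos_angle_mul_norm_mul_norm (v i) (v j)
      have hinner : (1 - δ ^ 2 / 2) * (‖v i‖ * ‖v j‖) ≤ ⟪v i, v j⟫ := by
        rw [← hip]
        have := mul_nonneg (norm_nonneg (v i)) (norm_nonneg (v j))
        nlinarith
      have h6 := abs_le.mp (hlenv i j)
      have hub : ‖v i‖ / ‖v j‖ ≤ 1 + δ := by linarith [h6.1]
      have hlb : 1 - δ ≤ ‖v i‖ / ‖v j‖ := by linarith [h6.2]
      rw [div_le_iff₀ hb] at hub
      rw [le_div_iff₀ hb] at hlb
      have hsq := norm_sub_sq_real (v i) (v j)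
      have h2b : (0:ℝ) ≤ 2 * δ * ‖v j‖ := by positivity
      have h2 : ‖v i - v j‖ ^ 2 ≤ (2 * δ * ‖v j‖) ^ 2 := by
        nlinarith [mul_nonneg (sub_nonneg.2 hub) (sub_nonneg.2 hlb),
          mul_nonneg (mul_nonneg (sq_nonneg δ) hb.le) (sub_nonneg.2 hub),
          mul_nonneg (by linarith : (0:ℝ) ≤ 2 - δ)
            (mul_nonneg (sq_nonneg δ) (sq_nonneg ‖v j‖)),
          norm_nonneg (v i), hb, hδ0]
      have := Real.sqrt_le_sqrt h2
      rwa [Real.sqrt_sq (norm_nonneg _), Real.sqrt_sq h2b] at this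
    -- bound on the convex combination
    have hA : ‖(∑ i, w1 i • v i) - v j‖ ≤ 2 * δ * ‖v j‖ := by
      have e1 : (∑ i, w1 i • v i) - v j = ∑ i, w1 i • (v i - v j) := by
        simp only [smul_sub, Finset.sum_sub_distrib, ← Finset.sum_smul, hs1, one_smul]
      rw [e1]
      calc ‖∑ i, w1 i • (v i - v j)‖ ≤ ∑ i, ‖w1 i • (v i - v j)‖ :=
            norm_sum_le _ _
        _ = ∑ i, w1 i * ‖v i - v j‖ := by
            refine Finset.sum_congr rfl fun i _ => ?_
            rw [norm_smul, Real.norm_eq_abs, abs_of_nonneg (hw1 i)]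
        _ ≤ ∑ i, w1 i * (2 * δ * ‖v j‖) :=
            Finset.sum_le_sum fun i _ => mul_le_mul_of_nonneg_left (hvd i) (hw1 i)
        _ = 2 * δ * ‖v j‖ := by rw [← Finset.sum_mul, hs1, one_mul]
    -- bound on the error term
    have hE : ‖∑ i, (w1 i - w2 i) • f (r i)‖ ≤ δ * ‖v j‖ := by
      have hzero : ∑ i, (w1 i - w2 i) = 0 := by
        rw [Finset.sum_sub_distrib, hs1, hs2, sub_self]
      have e2 : ∑ i, (w1 i - w2 i) • f (r i)
          = ∑ i, (w1 i - w2 i) • (f (r i) - f (r j)) := by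
        simp only [smul_sub, Finset.sum_sub_distrib, ← Finset.sum_smul, hzero,
          zero_smul, sub_zero]
      rw [e2]
      have hS0nn : (0:ℝ) ≤ ∑ i, |w1 i - w2 i| :=
        Finset.sum_nonneg fun i _ => abs_nonneg _
      rcases hS0nn.lt_or_eq with hpos | hzero0
      · calc ‖∑ i, (w1 i - w2 i) • (f (r i) - f (r j))‖
            ≤ ∑ i, ‖(w1 i - w2 i) • (f (r i) - f (r j))‖ := norm_sum_le _ _
          _ = ∑ i, |w1 i - w2 i| * ‖f (r i) - f (r j)‖ := by
              refine Finset.sum_congr rfl fun i _ => ?_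
              rw [norm_smul, Real.norm_eq_abs]
          _ ≤ ∑ i, |w1 i - w2 i| * (δ * ‖v j‖ / (∑ i, |w1 i - w2 i|)) := by
              refine Finset.sum_le_sum fun i _ => mul_le_mul_of_nonneg_left ?_ (abs_nonneg _)
              rw [le_div_iff₀ hpos]
              have h := hWW i j j
              rw [hmrev j] at h
              linarith [h]
          _ = δ * ‖v j‖ := by
              rw [← Finset.sum_mul]
              field_simp
      · have hz : ∀ i ∈ Finset.univ, (w1 i - w2 i) • (f (r i) - f (r j))
            = (0 : EuclideanSpace ℝ (Fin n)) := by
          intro i _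
          have h0 : |w1 i - w2 i| = 0 :=
            le_antisymm (hzero0 ▸ Finset.single_le_sum
              (fun i (_ : i ∈ Finset.univ) => abs_nonneg (w1 i - w2 i))
              (Finset.mem_univ i)) (abs_nonneg _)
          rw [abs_eq_zero.mp h0, zero_smul]
        rw [Finset.sum_congr rfl hz]
        simp only [Finset.sum_const_zero, norm_zero]
        positivity
    -- decomposition
    have hdec : (∑ i, w1 i • f (q i)) - (∑ i, w2 i • f (r i))
        = (∑ i, (w1 i - w2 i) • f (r i)) - (∑ i, w1 i • v i) := by
      simp only [hv, smul_sub, sub_smul, Finset.sum_sub_distrib]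
      abel
    have htri : ‖((∑ i, w1 i • f (q i)) - (∑ i, w2 i • f (r i))) + v j‖
        ≤ 3 * δ * ‖v j‖ := by
      rw [hdec]
      have e3 : (∑ i, (w1 i - w2 i) • f (r i)) - (∑ i, w1 i • v i) + v j
          = (∑ i, (w1 i - w2 i) • f (r i)) + -((∑ i, w1 i • v i) - v j) := by abel
      rw [e3]
      have h1 := norm_add_le (∑ i, (w1 i - w2 i) • f (r i))
        (-((∑ i, w1 i • v i) - v j))
      rw [norm_neg] at h1
      linarith
    have habs2 : |‖(∑ i, w1 i • f (q i)) - (∑ i, w2 i • f (r i))‖ - ‖v j‖|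
        ≤ 3 * δ * ‖v j‖ := by
      have h := abs_norm_sub_norm_le
        ((∑ i, w1 i • f (q i)) - (∑ i, w2 i • f (r i))) (-(v j))
      rw [norm_neg, sub_neg_eq_add] at h
      exact h.trans htri
    have h2 := abs_le.mp habs2
    rw [hmrev j]
    have d1 : ‖(∑ i, w1 i • f (q i)) - (∑ i, w2 i • f (r i))‖ / ‖v j‖ ≤ 1 + 3 * δ :=
      (div_le_iff₀ hb).2 (by nlinarith)
    have d2 : 1 - 3 * δ ≤ ‖(∑ i, w1 i • f (q i)) - (∑ i, w2 i • f (r i))‖ / ‖v j‖ :=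
      (le_div_iff₀ hb).2 (by nlinarith)
    rw [abs_le]
    constructor <;> linarith
  constructor
  · intro j
    exact (key j).trans (by linarith)
  · intro hinj p s hp hs j
    by_cases hps : p = s
    · subst hps
      have hPS : (∑ i, w1 i • f (q i)) = (∑ i, w2 i • f (r i)) := hp.symm.trans hs
      have h1 := key j
      rw [← hPS, sub_self, norm_zero, zero_div, sub_zero, abs_one] at h1
      simp only [dist_self, zero_div, sub_zero, abs_one]
      linarith
    · have hd : 0 < dist p s := dist_pos.2 hps
      have hD : 0 < dist (q j) (r j) := dist_pos.2 (hqr j)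
      have hiso1 := abs_lt.mp (hiso p s hps)
      have hiso2 := abs_lt.mp (hiso (q j) (r j) (hqr j))
      have hm : 0 < ‖f (q j) - f (r j)‖ := by
        rcases (norm_nonneg (f (q j) - f (r j))).lt_or_eq with h0 | h0
        · exact h0
        · rw [← h0, zero_div] at hiso2
          linarith [hiso2.2]
      have hu : ‖f p - f s‖
          = ‖(∑ i, w1 i • f (q i)) - (∑ i, w2 i • f (r i))‖ := by rw [hp, hs]
      rw [hu] at hiso1
      have hkey := abs_le.mp (key j)
      set u := ‖(∑ i, w1 i • f (q i)) - (∑ i, w2 i • f (r i))‖ with hudef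
      set m := ‖f (q j) - f (r j)‖ with hmdef
      set d := dist p s with hddef
      set D := dist (q j) (r j) with hDdef
      clear_value u m d D
      have f1 : u < (1 + δ) * d := (div_lt_iff₀ hd).mp (by linarith [hiso1.1])
      have f2 : (1 - δ) * d < u := (lt_div_iff₀ hd).mp (by linarith [hiso1.2])
      have f3 : m < (1 + δ) * D := (div_lt_iff₀ hD).mp (by linarith [hiso2.1])
      have f4 : (1 - δ) * D < m := (lt_div_iff₀ hD).mp (by linarith [hiso2.2])
      have f5 : u ≤ (1 + 3 * δ) * m := (div_le_iff₀ hm).mp (by linarith [hkey.1])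
      have f6 : (1 - 3 * δ) * m ≤ u := (le_div_iff₀ hm).mp (by linarith [hkey.2])
      have g1 : d ≤ (1 + 20 * δ) * D := by
        have c1 : u ≤ (1 + 3 * δ) * ((1 + δ) * D) :=
          f5.trans (mul_le_mul_of_nonneg_left f3.le (by linarith))
        by_contra hcon
        push_neg at hcon
        have c2 : (1 - δ) * ((1 + 20 * δ) * D) < (1 - δ) * d :=
          mul_lt_mul_of_pos_left hcon (by linarith)
        have h4 : (1 - δ) * ((1 + 20 * δ) * D) < (1 + 3 * δ) * ((1 + δ) * D) := by
          linarith
        nlinarith [h4, mul_pos hδ0 hD,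
          mul_pos (show (0:ℝ) < 1/2 - δ by linarith) (mul_pos hδ0 hD)]
      have g2 : (1 - 20 * δ) * D ≤ d := by
        rcases le_or_gt (1/20 : ℝ) δ with hc | hc
        · nlinarith [mul_nonneg hD.le (show (0:ℝ) ≤ 20 * δ - 1 by linarith), hd.le]
        · have c2 : (1 - 3 * δ) * ((1 - δ) * D) ≤ u :=
            le_trans (mul_le_mul_of_nonneg_left f4.le (by linarith)) f6
          by_contra hcon
          push_neg at hcon
          have c3 : (1 + δ) * d < (1 + δ) * ((1 - 20 * δ) * D) :=
            mul_lt_mul_of_pos_left hcon (by linarith)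
          have h4 : (1 - 3 * δ) * ((1 - δ) * D) < (1 + δ) * ((1 - 20 * δ) * D) := by
            linarith
          nlinarith [h4, mul_pos hδ0 hD,
            mul_nonneg (mul_nonneg hδ0.le hδ0.le) hD.le]
      have e1 : d / D ≤ 1 + 20 * δ := (div_le_iff₀ hD).2 g1
      have e2 : 1 - 20 * δ ≤ d / D := (le_div_iff₀ hD).2 g2
      rw [abs_le]
      constructor <;> linarith
end

section
/- Let x, y, z be points in a metric space and x̃, ỹ, z̃ points in ℝⁿ such that each of the three pairwise distances agrees up to factor (1 ± δ): |1 − ‖x̃ − ỹ‖/d(x,y)| ≤ δ, and similarly for the other two pairs, with δ ≤ 1/4 and all three pairwise distances positive and comparable: each pairwise distance lies in [D, 2D] for some D > 0. Then the comparison angle ∠̃ x y z (computed from d via the Euclidean law of cosines) and the Euclidean angle at ỹ of the triangle (x̃, ỹ, z̃) differ by at most C·√δ for a universal constant C. -/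
/-!
Write `ra = ‖x̃ - ỹ‖ / d(x, y)`, `rb`, `rc` for the three distortion ratios, all within `δ` of `1`.
Passing from the side lengths `a, b, c` to `ra a, rb b, rc c` changes the cosine-law quotient
`(a² + b² - c²) / (2ab)` by
`a/(2b) (1 - ra/rb) + b/(2a) (1 - rb/ra) - c²/(2ab) (1 - rc²/(ra rb))`,
whose weights are bounded because the sides are comparable; so the cosines differ by `O(δ)`.
Both angles are arccosines of these quotients, and `arccos` is `1/2`-Hölder: for
`0 ≤ θ₁ ≤ θ₂ ≤ π`, Jordan's inequality gives
`cos θ₁ - cos θ₂ = 2 sin((θ₁ + θ₂)/2) sin((θ₂ - θ₁)/2) ≥ 2 ((θ₂ - θ₁)/π)²`.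
-/

open InnerProductGeometry Set

namespace Real

theorem sq_sub_le_pi_sq_mul_cos_sub_cos {θ₁ θ₂ : ℝ} (h₁ : 0 ≤ θ₁) (h₁₂ : θ₁ ≤ θ₂)
    (h₂ : θ₂ ≤ π) : (θ₂ - θ₁) ^ 2 ≤ π ^ 2 * (cos θ₁ - cos θ₂) := by
  obtain ⟨s, rfl⟩ : ∃ s, θ₂ = θ₁ + 2 * s := ⟨(θ₂ - θ₁) / 2, by ring⟩
  have hs : 0 ≤ s := by linarith
  have hcos : cos θ₁ - cos (θ₁ + 2 * s) = 2 * sin (θ₁ + s) * sin s := by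
    rw [cos_sub_cos, show (θ₁ + (θ₁ + 2 * s)) / 2 = θ₁ + s by ring,
      show (θ₁ - (θ₁ + 2 * s)) / 2 = -s by ring, sin_neg]
    ring
  have hjordan : 2 / π * s ≤ sin s := mul_le_sin hs (by linarith)
  have hsin_s : 0 ≤ sin s := le_trans (by positivity) hjordan
  have hsin : sin s ≤ sin (θ₁ + s) := by
    rcases le_or_gt (θ₁ + s) (π / 2) with h | h
    · exact sin_le_sin_of_le_of_le_pi_div_two (by linarith [pi_pos]) h (by linarith)
    · rw [← sin_pi_sub (θ₁ + s)]
      exact sin_le_sin_of_le_of_le_pi_div_two (by linarith [pi_pos]) (by linarith) (by linarith)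
  calc (θ₁ + 2 * s - θ₁) ^ 2 = π ^ 2 * (2 / π * s) ^ 2 := by field_simp; ring
    _ ≤ π ^ 2 * (sin s * sin (θ₁ + s)) := by
        gcongr
        calc (2 / π * s) ^ 2 ≤ sin s ^ 2 := by gcongr
          _ = sin s * sin s := sq _
          _ ≤ sin s * sin (θ₁ + s) := by gcongr
    _ ≤ π ^ 2 * (cos θ₁ - cos (θ₁ + 2 * s)) := by
        rw [hcos]
        have : 0 ≤ sin s * sin (θ₁ + s) := mul_nonneg hsin_s (hsin_s.trans hsin)
        gcongr π ^ 2 * ?_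
        linarith

theorem abs_arccos_sub_arccos_le_of_mem_Icc {p q : ℝ} (hp : p ∈ Icc (-1) 1) (hq : q ∈ Icc (-1) 1) :
    |arccos p - arccos q| ≤ π * √|p - q| := by
  wlog hqp : q ≤ p generalizing p q
  · rw [abs_sub_comm, abs_sub_comm p]
    exact this hq hp (le_of_not_ge hqp)
  have hmono : arccos p ≤ arccos q := arccos_le_arccos hqp
  have hgap := sq_sub_le_pi_sq_mul_cos_sub_cos (arccos_nonneg p) hmono (arccos_le_pi q)
  rw [cos_arccos hp.1 hp.2, cos_arccos hq.1 hq.2] at hgap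
  rw [abs_sub_comm, abs_of_nonneg (sub_nonneg.2 hmono), abs_of_nonneg (sub_nonneg.2 hqp)]
  calc arccos q - arccos p = √((arccos q - arccos p) ^ 2) := (sqrt_sq (sub_nonneg.2 hmono)).symm
    _ ≤ √(π ^ 2 * (p - q)) := sqrt_le_sqrt hgap
    _ = π * √(p - q) := by rw [sqrt_mul (sq_nonneg _), sqrt_sq pi_pos.le]

/-- Outside `[-1, 1]` the arccosine is constant, so the Hölder bound holds on all of `ℝ`. -/
theorem abs_arccos_sub_arccos_le (p q : ℝ) : |arccos p - arccos q| ≤ π * √|p - q| := by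
  have h : (-1 : ℝ) ≤ 1 := by norm_num
  have hproj (x : ℝ) : arccos (projIcc (-1) 1 h x) = arccos x := by
    rw [arccos_eq_pi_div_two_sub_arcsin, arcsin_projIcc, arccos_eq_pi_div_two_sub_arcsin]
  rw [← hproj p, ← hproj q]
  calc _ ≤ π * √|(projIcc (-1) 1 h p : ℝ) - projIcc (-1) 1 h q| :=
        abs_arccos_sub_arccos_le_of_mem_Icc (Subtype.mem _) (Subtype.mem _)
    _ ≤ π * √|p - q| := by gcongr π * √?_; exact abs_projIcc_sub_projIcc h

end Real

/-- The cosine of the angle between the sides `a` and `b` of a triangle with sides `a, b, c`. -/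
noncomputable def cosOfSides (a b c : ℝ) : ℝ := (a ^ 2 + b ^ 2 - c ^ 2) / (2 * a * b)

theorem InnerProductGeometry.angle_eq_arccos_cosOfSides {E : Type*} [NormedAddCommGroup E]
    [InnerProductSpace ℝ E] (u v : E) :
    angle u v = Real.arccos (cosOfSides ‖u‖ ‖v‖ ‖u - v‖) := by
  rw [angle, cosOfSides,
    real_inner_eq_norm_mul_self_add_norm_mul_self_sub_norm_sub_mul_self_div_two]
  congr 1
  ring

theorem abs_one_sub_mul_div_mul_le {p q r s δ : ℝ} (hδ : δ ≤ 1 / 4) (hp : |1 - p| ≤ δ)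
    (hq : |1 - q| ≤ δ) (hr : |1 - r| ≤ δ) (hs : |1 - s| ≤ δ) :
    |1 - p * q / (r * s)| ≤ 8 * δ := by
  rw [abs_le] at hp hq hr hs
  have hrs : 9 / 16 ≤ r * s := by nlinarith
  have hrs₀ : 0 < r * s := by linarith
  have hδ₀ : 0 ≤ δ := by linarith [hp.1, hp.2]
  rw [one_sub_div hrs₀.ne', abs_div, abs_of_pos hrs₀, div_le_iff₀ hrs₀, abs_le]
  constructor <;> nlinarith [mul_le_mul_of_nonneg_left hrs hδ₀]
theorem abs_cosOfSides_sub_cosOfSides_mul_le {a b c ra rb rc δ D : ℝ} (hD : 0 < D)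
    (hδ : δ ≤ 1 / 4) (ha₁ : D ≤ a) (ha₂ : a ≤ 2 * D) (hb₁ : D ≤ b) (hb₂ : b ≤ 2 * D)
    (hc₁ : D ≤ c) (hc₂ : c ≤ 2 * D) (hra : |1 - ra| ≤ δ) (hrb : |1 - rb| ≤ δ)
    (hrc : |1 - rc| ≤ δ) :
    |cosOfSides a b c - cosOfSides (ra * a) (rb * b) (rc * c)| ≤ 32 * δ := by
  have ha : 0 < a := hD.trans_le ha₁
  have hb : 0 < b := hD.trans_le hb₁
  have hra₀ : ra ≠ 0 := by rw [abs_le] at hra; linarith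
  have hrb₀ : rb ≠ 0 := by rw [abs_le] at hrb; linarith
  have hone : |1 - 1| ≤ δ := by rw [sub_self, abs_zero]; exact (abs_nonneg _).trans hra
  have hab : |1 - ra / rb| ≤ 8 * δ := by simpa using abs_one_sub_mul_div_mul_le hδ hra hone hrb hone
  have hba : |1 - rb / ra| ≤ 8 * δ := by simpa using abs_one_sub_mul_div_mul_le hδ hrb hone hra hone
  have hcc : |1 - rc * rc / (ra * rb)| ≤ 8 * δ := abs_one_sub_mul_div_mul_le hδ hrc hrc hra hrb
  have wa : |a / (2 * b)| ≤ 1 := by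
    rw [abs_of_pos (by positivity), div_le_one (by positivity)]; linarith
  have wb : |b / (2 * a)| ≤ 1 := by
    rw [abs_of_pos (by positivity), div_le_one (by positivity)]; linarith
  have wc : |c ^ 2 / (2 * a * b)| ≤ 2 := by
    rw [abs_of_nonneg (by positivity), div_le_iff₀ (by positivity)]; nlinarith
  have hsplit : cosOfSides a b c - cosOfSides (ra * a) (rb * b) (rc * c) =
      a / (2 * b) * (1 - ra / rb) + b / (2 * a) * (1 - rb / ra)
        - c ^ 2 / (2 * a * b) * (1 - rc * rc / (ra * rb)) := by
    unfold cosOfSides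
    field_simp
    ring
  rw [hsplit]
  calc _ ≤ |a / (2 * b)| * |1 - ra / rb| + |b / (2 * a)| * |1 - rb / ra|
        + |c ^ 2 / (2 * a * b)| * |1 - rc * rc / (ra * rb)| := by
        simp only [← abs_mul]
        exact (abs_sub _ _).trans (add_le_add_left (abs_add_le _ _) _)
    _ ≤ 1 * (8 * δ) + 1 * (8 * δ) + 2 * (8 * δ) := by gcongr
    _ = 32 * δ := by ring

theorem stmt17 : ∃ C : ℝ, 0 < C ∧ ∀ (X : Type*) [MetricSpace X] (n : ℕ)
    (x y z : X) (xt yt zt : EuclideanSpace ℝ (Fin n)) (δ D : ℝ),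
    0 < D → 0 ≤ δ → δ ≤ 1/4 →
    D ≤ dist x y → dist x y ≤ 2 * D →
    D ≤ dist y z → dist y z ≤ 2 * D →
    D ≤ dist x z → dist x z ≤ 2 * D →
    |1 - ‖xt - yt‖ / dist x y| ≤ δ →
    |1 - ‖yt - zt‖ / dist y z| ≤ δ →
    |1 - ‖xt - zt‖ / dist x z| ≤ δ →
    |Real.arccos ((dist x y ^ 2 + dist y z ^ 2 - dist x z ^ 2)
        / (2 * dist x y * dist y z))
      - angle (xt - yt) (zt - yt)| ≤ C * Real.sqrt δ := by
  refine ⟨Real.pi * √32, by positivity, ?_⟩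
  intro X _ n x y z xt yt zt δ D hD _ hδ hxy₁ hxy₂ hyz₁ hyz₂ hxz₁ hxz₂ hrxy hryz hrxz
  have hdist (u v : X) (h : D ≤ dist u v) : dist u v ≠ 0 := (hD.trans_le h).ne'
  rw [angle_eq_arccos_cosOfSides, sub_sub_sub_cancel_right, norm_sub_rev zt yt,
    ← div_mul_cancel₀ ‖xt - yt‖ (hdist x y hxy₁), ← div_mul_cancel₀ ‖yt - zt‖ (hdist y z hyz₁),
    ← div_mul_cancel₀ ‖xt - zt‖ (hdist x z hxz₁)]
  calc _ ≤ Real.pi * √|cosOfSides (dist x y) (dist y z) (dist x z)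
          - cosOfSides (‖xt - yt‖ / dist x y * dist x y) (‖yt - zt‖ / dist y z * dist y z)
              (‖xt - zt‖ / dist x z * dist x z)| := Real.abs_arccos_sub_arccos_le _ _
    _ ≤ Real.pi * √(32 * δ) := by
        gcongr Real.pi * √?_
        exact abs_cosOfSides_sub_cosOfSides_mul_le hD hδ hxy₁ hxy₂ hyz₁ hyz₂ hxz₁ hxz₂
          hrxy hryz hrxz
    _ = Real.pi * √32 * √δ := by rw [Real.sqrt_mul (by norm_num), mul_assoc]
end
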